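/- arXiv:2511.05192 — 2 statements merged into one kernel-verified Lean document; each statement's English description precedes it below -/
import Mathlib

section
/- Let K be a field containing all roots of unity, and let L be the extension of K generated by all elements a of a fixed algebraic closure satisfying a^N ∈ K for some N ≥ 1. Then L/K is an abelian (Galois) extension, and conversely every finite abelian extension of K is contained in L. -/
/-!
A `K`-automorphism sends an `N`-th root `a` of an element of `K` to another one, so it multiplies
`a` by an `N`-th root of unity, which lies in `K`; hence any two automorphisms commute on the
generators of `L`, and `L` is stable under automorphisms of `Ω`.

Conversely, let `F/K` be finite abelian with group `G`. Characters of `G` separate points, so the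
subgroups `H` with `G ⧸ H` cyclic intersect trivially, and by the Galois correspondence the fixed
fields of these `H` generate `F`. Each such fixed field is cyclic over `K`, hence by cyclic Kummer
theory of the form `K(α)` with `α ^ n ∈ K`.
-/

open IntermediateField

theorem CommGroup.exists_isCyclic_quotient_notMem {G : Type*} [CommGroup G] [Finite G]
    {g : G} (hg : g ≠ 1) : ∃ H : Subgroup G, IsCyclic (G ⧸ H) ∧ g ∉ H := by
  have : NeZero (Monoid.exponent G) := ⟨Monoid.exponent_ne_zero_of_finite⟩
  obtain ⟨φ, hφ⟩ := CommGroup.exists_apply_ne_one_of_hasEnoughRootsOfUnity G ℂ hg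
  have : Finite φ.range := Finite.of_surjective _ φ.rangeRestrict_surjective
  have : IsCyclic φ.range := isCyclic_subgroup_units _
  exact ⟨φ.ker, isCyclic_of_surjective _ (QuotientGroup.quotientKerEquivRange φ).symm.surjective, hφ⟩

theorem IsPrimitiveRoot.exists_eq_pow_mul_of_pow_eq {R : Type*} [Field R] {ζ : R} {N : ℕ}
    [NeZero N] (hζ : IsPrimitiveRoot ζ N) {x y : R} (h : y ^ N = x ^ N) :
    ∃ i, y = ζ ^ i * x := by
  rcases eq_or_ne x 0 with rfl | hx
  · exact ⟨0, by simpa [NeZero.ne N] using h⟩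
  obtain ⟨i, -, hi⟩ := hζ.eq_pow_of_pow_eq_one (ξ := y / x)
    (by rw [div_pow, h, div_self (pow_ne_zero _ hx)])
  exact ⟨i, by rw [hi, div_mul_cancel₀ _ hx]⟩

def radicals (K E : Type*) [Field K] [Field E] [Algebra K E] : Set E :=
  {a | ∃ N : ℕ, 1 ≤ N ∧ a ^ N ∈ (⊥ : IntermediateField K E)}

section Radicals

variable {K E E' : Type*} [Field K] [Field E] [Field E'] [Algebra K E] [Algebra K E']

theorem map_mem_radicals (f : E →ₐ[K] E') {a : E} (ha : a ∈ radicals K E) :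
    f a ∈ radicals K E' := by
  obtain ⟨N, hN, hmem⟩ := ha
  obtain ⟨c, hc⟩ := mem_bot.mp hmem
  exact ⟨N, hN, mem_bot.mpr ⟨c, by rw [← map_pow, ← hc, AlgHom.commutes]⟩⟩

theorem map_adjoin_radicals_le (f : E →ₐ[K] E') :
    (adjoin K (radicals K E)).map f ≤ adjoin K (radicals K E') := by
  rw [adjoin_map]
  exact adjoin.mono _ _ _ (Set.image_subset_iff.mpr fun _ ↦ map_mem_radicals f)

theorem fieldRange_le_adjoin_radicals (f : E →ₐ[K] E') (h : adjoin K (radicals K E) = ⊤) :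
    f.fieldRange ≤ adjoin K (radicals K E') := by
  rw [f.fieldRange_eq_map, ← h]
  exact map_adjoin_radicals_le f

theorem IntermediateField.coe_mem_radicals_iff {M : IntermediateField K E} {x : M} :
    x ∈ radicals K M ↔ (x : E) ∈ radicals K E := by
  refine ⟨map_mem_radicals M.val, fun ⟨N, hN, hmem⟩ ↦ ⟨N, hN, ?_⟩⟩
  obtain ⟨c, hc⟩ := mem_bot.mp hmem
  exact mem_bot.mpr ⟨c, Subtype.ext hc⟩

theorem normal_adjoin_radicals [Normal K E] : Normal K (adjoin K (radicals K E)) :=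
  normal_iff_forall_map_le'.mpr fun σ ↦ map_adjoin_radicals_le (σ : E →ₐ[K] E)

theorem AlgHom.exists_apply_eq_algebraMap_mul (σ : E →ₐ[K] E) {ζ : K} {N : ℕ} [NeZero N]
    (hζ : IsPrimitiveRoot ζ N) {x : E} (hx : x ^ N ∈ (⊥ : IntermediateField K E)) :
    ∃ u : K, σ x = algebraMap K E u * x := by
  obtain ⟨c, hc⟩ := mem_bot.mp hx
  obtain ⟨i, hi⟩ := (hζ.map_of_injective (algebraMap K E).injective).exists_eq_pow_mul_of_pow_eq
    (x := x) (y := σ x) (by rw [← map_pow, ← hc, σ.commutes])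
  exact ⟨ζ ^ i, by rw [map_pow, hi]⟩

theorem AlgHom.apply_apply_comm_of_mem_radicals
    (hroots : ∀ n : ℕ, 0 < n → ∃ ζ : K, IsPrimitiveRoot ζ n) (σ τ : E →ₐ[K] E) {x : E}
    (hx : x ∈ radicals K E) : σ (τ x) = τ (σ x) := by
  obtain ⟨N, hN, hxN⟩ := hx
  have : NeZero N := ⟨by omega⟩
  obtain ⟨ζ, hζ⟩ := hroots N hN
  obtain ⟨u, hu⟩ := σ.exists_apply_eq_algebraMap_mul hζ hxN
  obtain ⟨v, hv⟩ := τ.exists_apply_eq_algebraMap_mul hζ hxN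
  rw [hu, hv, map_mul, map_mul, σ.commutes, τ.commutes, hu, hv, mul_left_comm]

theorem isAbelianGalois_adjoin_radicals [CharZero K] [Normal K E]
    (hroots : ∀ n : ℕ, 0 < n → ∃ ζ : K, IsPrimitiveRoot ζ n) :
    IsAbelianGalois K (adjoin K (radicals K E)) where
  toIsGalois := { to_normal := normal_adjoin_radicals }
  is_comm := ⟨fun σ τ ↦ AlgEquiv.coe_toAlgHom_injective <| adjoin_algHom_ext K fun x hx ↦
    AlgHom.apply_apply_comm_of_mem_radicals hroots σ.toAlgHom τ.toAlgHom
      (x := ⟨x, subset_adjoin K _ hx⟩) (coe_mem_radicals_iff.mpr hx)⟩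

theorem adjoin_radicals_eq_top_of_isCyclic [FiniteDimensional K E] [IsGalois K E]
    [IsCyclic Gal(E/K)] (hK : (primitiveRoots (Module.finrank K E) K).Nonempty) :
    adjoin K (radicals K E) = ⊤ := by
  obtain ⟨α, hα, hαtop⟩ := exists_root_adjoin_eq_top_of_isCyclic K E hK
  rw [eq_top_iff, ← hαtop]
  exact adjoin.mono _ _ _ (Set.singleton_subset_iff.mpr ⟨_, Module.finrank_pos, mem_bot.mpr hα⟩)

theorem fixedField_le_adjoin_radicals [FiniteDimensional K E] [IsAbelianGalois K E]
    (hroots : ∀ n : ℕ, 0 < n → ∃ ζ : K, IsPrimitiveRoot ζ n) (H : Subgroup Gal(E/K))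
    [IsCyclic (Gal(E/K) ⧸ H)] : fixedField H ≤ adjoin K (radicals K E) := by
  have : IsCyclic Gal(fixedField H/K) :=
    isCyclic_of_surjective _ (IsGalois.normalAutEquivQuotient H).surjective
  have hpos : 0 < Module.finrank K (fixedField H) := Module.finrank_pos
  obtain ⟨ζ, hζ⟩ := hroots _ hpos
  simpa using fieldRange_le_adjoin_radicals (fixedField H).val
    (adjoin_radicals_eq_top_of_isCyclic ⟨ζ, (mem_primitiveRoots hpos).mpr hζ⟩)

open scoped IsMulCommutative in
theorem adjoin_radicals_eq_top_of_isAbelianGalois [FiniteDimensional K E] [IsAbelianGalois K E]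
    (hroots : ∀ n : ℕ, 0 < n → ∃ ζ : K, IsPrimitiveRoot ζ n) :
    adjoin K (radicals K E) = ⊤ := by
  have hfix : fixingSubgroup (adjoin K (radicals K E)) = ⊥ := by
    refine (Subgroup.eq_bot_iff_forall _).mpr fun σ hσ ↦ by_contra fun hne ↦ ?_
    obtain ⟨H, hH, hσH⟩ := CommGroup.exists_isCyclic_quotient_notMem hne
    exact hσH (fixingSubgroup_fixedField H ▸
      fixingSubgroup_antitone (fixedField_le_adjoin_radicals hroots H) hσ)
  rw [← IsGalois.fixedField_fixingSubgroup (adjoin K (radicals K E)), hfix, fixedField_bot]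

end Radicals

/-- Let `K` be a field of characteristic `0` containing all roots of unity, and inside a
fixed algebraic closure `Ω` of `K` let `L` be the extension of `K` generated by all
elements `a` with `a ^ N ∈ K` for some `N ≥ 1`.  Then `L/K` is an abelian Galois
extension, and conversely every finite abelian (Galois) extension of `K` inside `Ω`
is contained in `L`. -/
theorem radical_closure_is_maximal_abelian_extension
    (K : Type*) [Field K] [CharZero K]
    (hroots : ∀ n : ℕ, 0 < n → ∃ ζ : K, IsPrimitiveRoot ζ n) :
    letI Ω := AlgebraicClosure K
    letI L : IntermediateField K Ω :=
      IntermediateField.adjoin K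
        {a : Ω | ∃ N : ℕ, 1 ≤ N ∧ a ^ N ∈ (⊥ : IntermediateField K Ω)}
    (IsGalois K ↥L ∧ (∀ σ τ : ↥L ≃ₐ[K] ↥L, σ * τ = τ * σ)) ∧
    (∀ F : IntermediateField K Ω, FiniteDimensional K ↥F → IsGalois K ↥F →
      (∀ σ τ : ↥F ≃ₐ[K] ↥F, σ * τ = τ * σ) → F ≤ L) := by
  refine ⟨?_, fun F _ _ hcomm ↦ ?_⟩
  · have := isAbelianGalois_adjoin_radicals (E := AlgebraicClosure K) hroots
    exact ⟨this.toIsGalois, this.is_comm.comm⟩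
  · have : IsAbelianGalois K F := { is_comm := ⟨hcomm⟩ }
    have h := fieldRange_le_adjoin_radicals F.val (adjoin_radicals_eq_top_of_isAbelianGalois hroots)
    rwa [fieldRange_val] at h
end

section
/- Let G be a topologically finitely generated profinite group. Then G admits a fundamental system of open characteristic subgroups: there exist open characteristic subgroups G = D_0 ⊇ D_1 ⊇ D_2 ⊇ ... with ∩_{i≥0} D_i = {1}. -/
/-!
Let `D_n` (`openIndexLECore G n`) be the intersection of all open subgroups of index at most `n`.
A continuous automorphism permutes these subgroups, so `D_n` is characteristic. If `S` is finite
and generates a dense subgroup, an open subgroup `H` of index `≤ n` is the stabiliser of a point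
for a continuous action of `G` on `Fin n`, and such an action is determined by its restriction to
`S`; so there are finitely many such `H` and `D_n` is open. In a profinite group every `x ≠ 1`
lies outside some open normal subgroup `N`, hence outside `D_[G:N]`.
-/

namespace MonoidHom

variable {G F : Type*} [Group G] [TopologicalSpace G] [IsTopologicalGroup G] [Group F]

theorem continuous_of_isOpen_ker [TopologicalSpace F] [DiscreteTopology F] (f : G →* F)
    (hf : IsOpen (f.ker : Set G)) : Continuous f := by
  refine continuous_of_continuousAt_one f ?_
  rw [ContinuousAt, nhds_discrete F, Filter.tendsto_pure, map_one]
  exact hf.mem_nhds f.ker.one_mem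

/-- A homomorphism with open kernel is continuous for the discrete topology on `F`, hence
determined by its values on a set generating a dense subgroup. -/
theorem finite_setOf_isOpen_ker [Finite F] {S : Set G} (hS : S.Finite)
    (hdense : Dense (Subgroup.closure S : Set G)) :
    {f : G →* F | IsOpen (f.ker : Set G)}.Finite := by
  let _ : TopologicalSpace F := ⊥
  have : DiscreteTopology F := ⟨rfl⟩
  have := hS.to_subtype
  refine Set.Finite.of_injOn (f := fun f (s : S) => f s) (Set.mapsTo_univ _ _) ?_ Set.finite_univ
  intro f hf g hg hfg
  refine DFunLike.coe_injective <| Continuous.ext_on hdense (f.continuous_of_isOpen_ker hf)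
    (g.continuous_of_isOpen_ker hg) (eqOn_closure fun s hs => ?_)
  exact congrFun hfg ⟨s, hs⟩

end MonoidHom

namespace Subgroup

variable {G : Type*} [Group G]

/-- `ρ` is the action of `G` on `G ⧸ H`, transported along an embedding `G ⧸ H ↪ Fin n`. -/
theorem exists_eq_comap_stabilizer_perm (H : Subgroup G) [H.FiniteIndex] {n : ℕ}
    (hn : H.index ≤ n) :
    ∃ ρ : G →* Equiv.Perm (Fin n), ρ.ker = H.normalCore ∧
      ∃ i : Fin n, H = (MulAction.stabilizer (Equiv.Perm (Fin n)) i).comap ρ := by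
  have : Finite (G ⧸ H) := finite_quotient_of_finiteIndex
  let ι : G ⧸ H ↪ Fin n :=
    (Finite.equivFin _).toEmbedding.trans (Fin.castLEEmb (H.index_eq_card ▸ hn))
  refine ⟨(Equiv.Perm.viaEmbeddingHom ι).comp (MulAction.toPermHom G (G ⧸ H)), ?_, ι ↑(1 : G), ?_⟩
  · rw [MonoidHom.ker_comp_of_injective _ _ (Equiv.Perm.viaEmbeddingHom_injective ι),
      normalCore_eq_ker]
  · ext g
    simp only [mem_comap, MulAction.mem_stabilizer_iff, MonoidHom.coe_comp, Function.comp_apply,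
      Equiv.Perm.viaEmbeddingHom_apply, Equiv.Perm.smul_def, MulAction.toPermHom_apply]
    rw [Equiv.Perm.viaEmbedding_apply, ι.injective.eq_iff, MulAction.toPerm_apply,
      ← MulAction.mem_stabilizer_iff, MulAction.stabilizer_quotient]

end Subgroup

/-- Finite index is required explicitly: `Subgroup.index` is `0` for subgroups of infinite index. -/
def openSubgroupsIndexLE (G : Type*) [Group G] [TopologicalSpace G] (n : ℕ) : Set (Subgroup G) :=
  {H | IsOpen (H : Set G) ∧ H.FiniteIndex ∧ H.index ≤ n}

def openIndexLECore (G : Type*) [Group G] [TopologicalSpace G] (n : ℕ) : Subgroup G :=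
  sInf (openSubgroupsIndexLE G n)

section

variable {G : Type*} [Group G] [TopologicalSpace G]

theorem openIndexLECore_zero : openIndexLECore G 0 = ⊤ :=
  sInf_eq_top.2 fun _ ⟨_, hfin, hle⟩ => absurd (Nat.le_zero.1 hle) hfin.index_ne_zero

theorem antitone_openIndexLECore : Antitone (openIndexLECore G) :=
  fun _ _ hmn => sInf_le_sInf fun _ ⟨hopen, hfin, hle⟩ => ⟨hopen, hfin, hle.trans hmn⟩

theorem comap_mem_openSubgroupsIndexLE {G' : Type*} [Group G'] [TopologicalSpace G'] {n : ℕ}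
    {f : G →* G'} (hf : Continuous f) (hsurj : Function.Surjective f) {H : Subgroup G'}
    (hH : H ∈ openSubgroupsIndexLE G' n) : H.comap f ∈ openSubgroupsIndexLE G n := by
  obtain ⟨hopen, hfin, hle⟩ := hH
  refine ⟨hopen.preimage hf, ⟨?_⟩, ?_⟩ <;> rw [H.index_comap_of_surjective hsurj]
  exacts [hfin.index_ne_zero, hle]

theorem openIndexLECore_le_comap {G' : Type*} [Group G'] [TopologicalSpace G'] (n : ℕ)
    {f : G →* G'} (hf : Continuous f) (hsurj : Function.Surjective f) :
    openIndexLECore G n ≤ (openIndexLECore G' n).comap f := fun _ hx =>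
  Subgroup.mem_sInf.2 fun _ hH =>
    Subgroup.mem_sInf.1 hx _ (comap_mem_openSubgroupsIndexLE hf hsurj hH)

theorem map_openIndexLECore [CompactSpace G] [T2Space G] (n : ℕ) (e : G ≃* G)
    (he : Continuous e) : (openIndexLECore G n).map e.toMonoidHom = openIndexLECore G n := by
  have he_symm : Continuous e.symm := (he.homeoOfEquivCompactToT2 (f := e.toEquiv)).symm.continuous
  refine le_antisymm (Subgroup.map_le_iff_le_comap.2 ?_) ?_
  · exact openIndexLECore_le_comap n he e.surjective
  · rw [Subgroup.map_equiv_eq_comap_symm']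
    exact openIndexLECore_le_comap n he_symm e.symm.surjective

variable [IsTopologicalGroup G]

theorem finite_openSubgroupsIndexLE {S : Set G} (hS : S.Finite)
    (hdense : Dense (Subgroup.closure S : Set G)) (n : ℕ) :
    (openSubgroupsIndexLE G n).Finite := by
  let stabilizerComap : (G →* Equiv.Perm (Fin n)) × Fin n → Subgroup G :=
    fun p => (MulAction.stabilizer _ p.2).comap p.1
  refine (((MonoidHom.finite_setOf_isOpen_ker hS hdense).prod Set.finite_univ).image
    stabilizerComap).subset ?_
  rintro H ⟨hopen, hfin, hle⟩
  obtain ⟨ρ, hker, i, hH⟩ := H.exists_eq_comap_stabilizer_perm hle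
  refine ⟨(ρ, i), ⟨?_, trivial⟩, hH.symm⟩
  rw [Set.mem_ofPred_eq, hker]
  exact H.normalCore.isOpen_of_isClosed_of_finiteIndex
    (H.normalCore_isClosed (H.isClosed_of_isOpen hopen))

theorem isOpen_openIndexLECore {S : Set G} (hS : S.Finite)
    (hdense : Dense (Subgroup.closure S : Set G)) (n : ℕ) :
    IsOpen (openIndexLECore G n : Set G) := by
  rw [openIndexLECore, Subgroup.coe_sInf]
  exact (finite_openSubgroupsIndexLE hS hdense n).isOpen_biInter fun H hH => hH.1

theorem iInf_openIndexLECore_eq_bot [CompactSpace G] [TotallyDisconnectedSpace G] [T1Space G] :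
    ⨅ n, openIndexLECore G n = ⊥ := by
  refine (Subgroup.eq_bot_iff_forall _).2 fun x hx => by_contra fun hx1 => ?_
  obtain ⟨N, hN⟩ := ProfiniteGrp.exist_openNormalSubgroup_sub_open_nhds_of_one
    isOpen_compl_singleton (Ne.symm hx1)
  have : Finite (G ⧸ N.toSubgroup) := N.toSubgroup.quotient_finite_of_isOpen N.isOpen'
  have hN_mem : N.toSubgroup ∈ openSubgroupsIndexLE G N.toSubgroup.index :=
    ⟨N.isOpen', Subgroup.finiteIndex_of_finite_quotient, le_rfl⟩
  exact hN (Subgroup.mem_sInf.1 (Subgroup.mem_iInf.1 hx _) _ hN_mem) rfl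

end

/-- A topologically finitely generated profinite group admits a fundamental system of
open characteristic subgroups: a descending chain `G = D 0 ⊇ D 1 ⊇ ⋯` of open subgroups,
each preserved by every continuous automorphism of `G`, with trivial intersection. -/
theorem exists_fundamental_system_of_open_characteristic_subgroups
    (G : Type*) [Group G] [TopologicalSpace G] [IsTopologicalGroup G]
    [CompactSpace G] [TotallyDisconnectedSpace G] [T2Space G]
    (hfg : ∃ S : Set G, S.Finite ∧ (Subgroup.closure S).topologicalClosure = ⊤) :
    ∃ D : ℕ → Subgroup G,
      D 0 = ⊤ ∧
      Antitone D ∧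
      (∀ n, IsOpen (D n : Set G)) ∧
      (∀ n, ∀ e : G ≃* G, Continuous e → (D n).map e.toMonoidHom = D n) ∧
      (⨅ n, D n) = ⊥ := by
  obtain ⟨S, hSfin, hS⟩ := hfg
  have hdense : Dense (Subgroup.closure S : Set G) := by
    rw [dense_iff_closure_eq, ← Subgroup.topologicalClosure_coe, hS, Subgroup.coe_top]
  exact ⟨openIndexLECore G, openIndexLECore_zero, antitone_openIndexLECore,
    isOpen_openIndexLECore hSfin hdense, map_openIndexLECore, iInf_openIndexLECore_eq_bot⟩
end
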